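/- Let A be a unital C*-algebra and \alpha an element of A. For t real, define the 2-by-2 matrix over A: v(t) = [[(1 + t^2 \alpha^* \alpha)^{-1/2}, (1 + t^2 \alpha^* \alpha)^{-1/2} \, t \alpha^*], [-(1 + t^2 \alpha \alpha^*)^{-1/2} \, t \alpha, (1 + t^2 \alpha \alpha^*)^{-1/2}]], where the inverse square roots are taken by continuous functional calculus applied to the invertible positive elements 1 + t^2 \alpha^* \alpha and 1 + t^2 \alpha \alpha^*. Then for every real t the matrix v(t) satisfies v(t)^* v(t) = v(t) v(t)^* = 1 in M_2(A), the map t \mapsto v(t) is norm-continuous, and v(0) = 1; in particular v(1) is a unitary of M_2(A) lying in the path component of the identity of the unitary group of M_2(A). -/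

import Mathlib

open scoped Matrix

/-- `b^{-1/2}` via the continuous functional calculus with the function `t ↦ t^{-1/2}`. -/
noncomputable def invSqrtCFC {A : Type*} [CStarAlgebra A] (b : A) : A :=
  cfc (fun t : ℝ => t ^ (-(1/2) : ℝ)) b

/-- The 2×2 matrix `v(t)` built from `α ∈ A`. -/
noncomputable def vPath {A : Type*} [CStarAlgebra A] (α : A) (t : ℝ) :
    Matrix (Fin 2) (Fin 2) A :=
  !![invSqrtCFC (1 + t ^ 2 • (star α * α)),
      invSqrtCFC (1 + t ^ 2 • (star α * α)) * (t • star α);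
    -(invSqrtCFC (1 + t ^ 2 • (α * star α)) * (t • α)),
      invSqrtCFC (1 + t ^ 2 • (α * star α))]

section Aux
variable {A : Type*} [CStarAlgebra A]

lemma vaux_contOn (t : ℝ) {x : A} (hx : ∀ s ∈ spectrum ℝ x, 0 ≤ s) :
    ContinuousOn (fun s : ℝ => (1 + t ^ 2 * s) ^ (-(1/2) : ℝ)) (spectrum ℝ x) := by
  intro s hs
  have h0 : (0:ℝ) ≤ s := hx s hs
  have h1 : (0:ℝ) < 1 + t ^ 2 * s := by positivity
  have hc : ContinuousAt (fun s : ℝ => 1 + t ^ 2 * s) s := by fun_prop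
  exact (hc.rpow_const (Or.inl h1.ne')).continuousWithinAt

lemma vaux_base_eq (t : ℝ) {x : A} (hxsa : IsSelfAdjoint x) :
    (1 : A) + t ^ 2 • x = cfc (fun s : ℝ => 1 + t ^ 2 * s) x := by
  rw [cfc_add (a := x) (fun _ => (1:ℝ)) (fun s => t ^ 2 * s) (by fun_prop) (by fun_prop),
    cfc_const_mul_id (t ^ 2) x hxsa, cfc_const 1 x hxsa, map_one]

lemma vaux_invSqrt_eq (t : ℝ) {x : A} (hxsa : IsSelfAdjoint x)
    (hx : ∀ s ∈ spectrum ℝ x, 0 ≤ s) :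
    invSqrtCFC (1 + t ^ 2 • x) =
      cfc (fun s : ℝ => (1 + t ^ 2 * s) ^ (-(1/2) : ℝ)) x := by
  rw [invSqrtCFC, vaux_base_eq t hxsa,
    ← cfc_comp (fun s : ℝ => s ^ (-(1/2) : ℝ)) (fun s : ℝ => 1 + t ^ 2 * s) x hxsa
      ?hg (by fun_prop)]
  · rfl
  case hg =>
    rintro s ⟨u, hu, rfl⟩
    have h0 : (0:ℝ) ≤ u := hx u hu
    have h1 : (0:ℝ) < 1 + t ^ 2 * u := by positivity
    exact (Real.continuousAt_rpow_const _ _ (Or.inl h1.ne')).continuousWithinAt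

lemma vaux_sa (t : ℝ) {x : A} (hxsa : IsSelfAdjoint x)
    (hx : ∀ s ∈ spectrum ℝ x, 0 ≤ s) :
    IsSelfAdjoint (invSqrtCFC (1 + t ^ 2 • x)) := by
  rw [vaux_invSqrt_eq t hxsa hx]
  exact cfc_predicate _ x

lemma vaux_mul_self_base (t : ℝ) {x : A} (hxsa : IsSelfAdjoint x)
    (hx : ∀ s ∈ spectrum ℝ x, 0 ≤ s) :
    invSqrtCFC (1 + t ^ 2 • x) * invSqrtCFC (1 + t ^ 2 • x) * (1 + t ^ 2 • x) = 1 := by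
  rw [vaux_invSqrt_eq t hxsa hx]
  nth_rewrite 1 [vaux_base_eq t hxsa]
  rw [← cfc_mul _ _ x (vaux_contOn t hx) (vaux_contOn t hx),
    ← cfc_mul (fun s : ℝ => (1 + t ^ 2 * s) ^ (-(1/2) : ℝ) * (1 + t ^ 2 * s) ^ (-(1/2) : ℝ)) _ x
      ((vaux_contOn t hx).mul (vaux_contOn t hx)) (by fun_prop)]
  have : cfc (fun _ : ℝ => (1:ℝ)) x = 1 := by
    rw [cfc_const 1 x hxsa, map_one]
  rw [← this]
  apply cfc_congr
  intro s hs
  have h0 : (0:ℝ) ≤ s := hx s hs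
  have h1 : (0:ℝ) < 1 + t ^ 2 * s := by positivity
  simp only
  rw [← Real.rpow_add h1]
  norm_num
  rw [Real.rpow_neg_one]
  exact inv_mul_cancel₀ h1.ne'

lemma vaux_commute (t : ℝ) {x : A} (hxsa : IsSelfAdjoint x)
    (hx : ∀ s ∈ spectrum ℝ x, 0 ≤ s) :
    Commute (invSqrtCFC (1 + t ^ 2 • x)) (1 + t ^ 2 • x) := by
  rw [vaux_invSqrt_eq t hxsa hx]
  nth_rewrite 1 [vaux_base_eq t hxsa]
  unfold Commute SemiconjBy
  rw [← cfc_mul _ _ x (vaux_contOn t hx) (by fun_prop),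
    ← cfc_mul _ _ x (by fun_prop) (vaux_contOn t hx)]
  exact cfc_congr fun s hs => mul_comm _ _

lemma vaux_invSqrt_one : invSqrtCFC (1 : A) = 1 := by
  rw [invSqrtCFC, ← map_one (algebraMap ℝ A), cfc_algebraMap, Real.one_rpow, map_one]

lemma vaux_continuous {x : A} (hxsa : IsSelfAdjoint x)
    (hx : ∀ s ∈ spectrum ℝ x, 0 ≤ s) :
    Continuous (fun t : ℝ => invSqrtCFC (1 + t ^ 2 • x)) := by
  have hF : Continuous (fun p : ℝ × spectrum ℝ x => (1 + p.1 ^ 2 * (p.2 : ℝ)) ^ (-(1/2) : ℝ)) := by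
    rw [continuous_iff_continuousAt]
    intro p
    have h0 : (0:ℝ) ≤ (p.2 : ℝ) := hx _ p.2.2
    have h1 : (0:ℝ) < 1 + p.1 ^ 2 * (p.2 : ℝ) := by positivity
    have hc : ContinuousAt (fun p : ℝ × spectrum ℝ x => 1 + p.1 ^ 2 * (p.2 : ℝ)) p := by
      fun_prop
    exact hc.rpow_const (Or.inl h1.ne')
  let F : C(ℝ × spectrum ℝ x, ℝ) := ⟨_, hF⟩
  have key : (fun t : ℝ => invSqrtCFC (1 + t ^ 2 • x)) =
      fun t => cfcHom hxsa ((ContinuousMap.curry F) t) := by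
    funext t
    rw [vaux_invSqrt_eq t hxsa hx, cfc_apply _ x hxsa (vaux_contOn t hx)]
    congr 1
  rw [key]
  exact (cfcHom_continuous hxsa).comp (ContinuousMap.curry F).continuous

end Aux

section AuxRing
variable {A : Type*} [Ring A] [StarRing A] [Module ℝ A] [SMulCommClass ℝ A A]
  [IsScalarTower ℝ A A] [StarModule ℝ A]

lemma vaux_unitary (t : ℝ) (p q u : A)
    (h1 : star p = p) (h2 : star q = q)
    (h3 : p * p * (1 + t ^ 2 • (star u * u)) = 1)
    (h5 : q * q * (1 + t ^ 2 • (u * star u)) = 1)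
    (hc1 : p * (1 + t ^ 2 • (star u * u)) = (1 + t ^ 2 • (star u * u)) * p)
    (hc2 : q * (1 + t ^ 2 • (u * star u)) = (1 + t ^ 2 • (u * star u)) * q)
    (h7 : star u * (q * q) = p * p * star u) :
    star (!![p, p * (t • star u); -(q * (t • u)), q]) *
        !![p, p * (t • star u); -(q * (t • u)), q] = 1 ∧
      !![p, p * (t • star u); -(q * (t • u)), q] *
        star (!![p, p * (t • star u); -(q * (t • u)), q]) = 1 := by
  set B := 1 + t ^ 2 • (star u * u) with hB
  set C := 1 + t ^ 2 • (u * star u) with hC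
  have h4 : B * (p * p) = 1 := by
    calc B * (p * p) = (B * p) * p := by rw [mul_assoc]
      _ = (p * B) * p := by rw [hc1]
      _ = p * (B * p) := by rw [mul_assoc]
      _ = p * (p * B) := by rw [hc1]
      _ = p * p * B := by rw [mul_assoc]
      _ = 1 := h3
  have h6 : C * (q * q) = 1 := by
    calc C * (q * q) = (C * q) * q := by rw [mul_assoc]
      _ = (q * C) * q := by rw [hc2]
      _ = q * (C * q) := by rw [mul_assoc]
      _ = q * (q * C) := by rw [hc2]
      _ = q * q * C := by rw [mul_assoc]
      _ = 1 := h5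
  have h7' : star u * (q * q) = p * (p * star u) := by rw [h7]; simp only [mul_assoc]
  have h8' : u * (p * p) = q * (q * u) := by
    have := congrArg star h7
    simpa [h1, h2, star_mul, mul_assoc] using this.symm
  have e3 : p * p + (t * t) • (p * (p * (star u * u))) = 1 := by
    have h := h3
    rw [hB] at h
    simp only [mul_add, mul_one, mul_smul_comm, mul_assoc, pow_two] at h
    exact h
  have e5 : q * q + (t * t) • (q * (q * (u * star u))) = 1 := by
    have h := h5
    rw [hC] at h
    simp only [mul_add, mul_one, mul_smul_comm, mul_assoc, pow_two] at h
    exact h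
  have e4 : p * p + (t * t) • (p * (star u * (u * p))) = 1 := by
    have h : p * (B * p) = 1 := by
      rw [← mul_assoc, hc1, mul_assoc, h4]
    rw [hB] at h
    simp only [add_mul, one_mul, smul_mul_assoc, mul_add, mul_smul_comm, mul_assoc, pow_two] at h
    exact h
  have e6 : q * q + (t * t) • (q * (u * (star u * q))) = 1 := by
    have h : q * (C * q) = 1 := by
      rw [← mul_assoc, hc2, mul_assoc, h6]
    rw [hC] at h
    simp only [add_mul, one_mul, smul_mul_assoc, mul_add, mul_smul_comm, mul_assoc, pow_two] at h
    exact h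
  constructor
  all_goals
    ext i j
    fin_cases i <;> fin_cases j <;>
      simp only [Matrix.mul_apply, Fin.sum_univ_two, Matrix.star_apply, Matrix.one_apply,
        Matrix.cons_val', Matrix.cons_val_zero, Matrix.cons_val_one, Matrix.head_cons,
        Matrix.head_fin_const, Matrix.empty_val', Matrix.cons_val_fin_one, Matrix.of_apply,
        star_mul, star_neg, star_star, star_smul, h1, h2,
        smul_mul_assoc, mul_smul_comm, smul_smul, mul_neg, neg_mul, mul_assoc, star_trivial,
        smul_neg, neg_neg,
        Fin.isValue, Fin.zero_eta, Fin.mk_one, if_true, if_false] <;>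
      try simp only []
  · -- L00
    have k1 : star u * (q * (q * u)) = p * (p * (star u * u)) := by
      have h := congrArg (· * u) h7'
      simpa only [mul_assoc] using h
    rw [k1]; exact e3
  · -- L01
    rw [← h7']; simp
  · -- L10
    rw [h8']; simp
  · -- L11
    have k3 : u * (p * (p * star u)) = q * (q * (u * star u)) := by
      have h := congrArg (· * star u) h8'
      simpa only [mul_assoc] using h
    rw [k3, add_comm]; exact e5
  · -- R00
    exact e4
  · simp
  · simp
  · rw [add_comm]; exact e6

end AuxRing

/-- For every `α` in a unital C*-algebra `A`, the matrices `v(t)` are unitary in `M₂(A)`,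
`t ↦ v(t)` is continuous, `v(0) = 1`; in particular `v(1)` is a unitary lying in the path
component of the identity of the unitary group of `M₂(A)`. -/
theorem vPath_unitary_path {A : Type*} [CStarAlgebra A] (α : A) :
    (∀ t : ℝ, star (vPath α t) * vPath α t = 1 ∧ vPath α t * star (vPath α t) = 1) ∧
    Continuous (fun t : ℝ => vPath α t) ∧
    vPath α 0 = 1 ∧
    (∃ w : ℝ → Matrix (Fin 2) (Fin 2) A, ContinuousOn w (Set.Icc 0 1) ∧
      w 0 = 1 ∧ w 1 = vPath α 1 ∧
      ∀ t ∈ Set.Icc (0:ℝ) 1, star (w t) * w t = 1 ∧ w t * star (w t) = 1) := by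
  have hxsa : IsSelfAdjoint (star α * α) := IsSelfAdjoint.star_mul_self α
  have hysa : IsSelfAdjoint (α * star α) := IsSelfAdjoint.mul_star_self α
  have hxspec : ∀ s ∈ spectrum ℝ (star α * α), 0 ≤ s := spectrum_star_mul_self_nonneg
  have hyspec : ∀ s ∈ spectrum ℝ (α * star α), 0 ≤ s := by
    have h := spectrum_star_mul_self_nonneg (b := star α)
    simpa using h
  have hunit : ∀ t : ℝ,
      star (vPath α t) * vPath α t = 1 ∧ vPath α t * star (vPath α t) = 1 := by
    intro t
    set β := invSqrtCFC (1 + t ^ 2 • (star α * α)) with hβ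
    set γ := invSqrtCFC (1 + t ^ 2 • (α * star α)) with hγ
    have hβsa : star β = β := (vaux_sa t hxsa hxspec).star_eq
    have hγsa : star γ = γ := (vaux_sa t hysa hyspec).star_eq
    have hβ2 : β * β * (1 + t ^ 2 • (star α * α)) = 1 := vaux_mul_self_base t hxsa hxspec
    have hγ2 : γ * γ * (1 + t ^ 2 • (α * star α)) = 1 := vaux_mul_self_base t hysa hyspec
    have hcβ : β * (1 + t ^ 2 • (star α * α)) = (1 + t ^ 2 • (star α * α)) * β :=
      vaux_commute t hxsa hxspec
    have hcγ : γ * (1 + t ^ 2 • (α * star α)) = (1 + t ^ 2 • (α * star α)) * γ :=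
      vaux_commute t hysa hyspec
    -- the inverse identity on the other side for γ
    have hcγ2 : (1 + t ^ 2 • (α * star α)) * (γ * γ) = 1 := by
      set C := 1 + t ^ 2 • (α * star α)
      calc C * (γ * γ) = (C * γ) * γ := by rw [mul_assoc]
        _ = (γ * C) * γ := by rw [hcγ]
        _ = γ * (C * γ) := by rw [mul_assoc]
        _ = γ * (γ * C) := by rw [hcγ]
        _ = γ * γ * C := by rw [mul_assoc]
        _ = 1 := hγ2
    have hint : star α * (1 + t ^ 2 • (α * star α)) =
        (1 + t ^ 2 • (star α * α)) * star α := by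
      simp [mul_add, add_mul, mul_smul_comm, smul_mul_assoc, mul_assoc]
    have h7 : star α * (γ * γ) = β * β * star α := by
      have e1 : (1 + t ^ 2 • (star α * α)) * (star α * (γ * γ)) = star α := by
        rw [← mul_assoc, ← hint, mul_assoc, hcγ2, mul_one]
      calc star α * (γ * γ)
          = (β * β * (1 + t ^ 2 • (star α * α))) * (star α * (γ * γ)) := by
            rw [hβ2, one_mul]
        _ = β * (β * ((1 + t ^ 2 • (star α * α)) * (star α * (γ * γ)))) := by
            simp only [mul_assoc]
        _ = β * (β * star α) := by rw [e1]
        _ = β * β * star α := by rw [mul_assoc]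
    have key := vaux_unitary t β γ α hβsa hγsa hβ2 hγ2 hcβ hcγ h7
    simpa only [vPath, ← hβ, ← hγ] using key
  have hcont : Continuous (fun t : ℝ => vPath α t) := by
    have c1 : Continuous fun t : ℝ => invSqrtCFC (1 + t ^ 2 • (star α * α)) :=
      vaux_continuous hxsa hxspec
    have c2 : Continuous fun t : ℝ => invSqrtCFC (1 + t ^ 2 • (α * star α)) :=
      vaux_continuous hysa hyspec
    have cs1 : Continuous fun t : ℝ => t • star α := continuous_id.smul continuous_const
    have cs2 : Continuous fun t : ℝ => t • α := continuous_id.smul continuous_const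
    apply continuous_matrix
    intro i j
    fin_cases i <;> fin_cases j <;>
      simp only [vPath, Matrix.cons_val', Matrix.cons_val_zero, Matrix.cons_val_one,
        Matrix.head_cons, Matrix.head_fin_const, Matrix.empty_val', Matrix.cons_val_fin_one,
        Matrix.of_apply, Fin.isValue, Fin.zero_eta, Fin.mk_one]
    · exact c1
    · exact c1.mul cs1
    · exact (c2.mul cs2).neg
    · exact c2
  have h0 : vPath α 0 = 1 := by
    have : invSqrtCFC ((1 : A) + (0:ℝ) ^ 2 • (star α * α)) = 1 := by
      norm_num [vaux_invSqrt_one]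
    have h2 : invSqrtCFC ((1 : A) + (0:ℝ) ^ 2 • (α * star α)) = 1 := by
      norm_num [vaux_invSqrt_one]
    simp [vPath, this, h2, vaux_invSqrt_one, Matrix.one_fin_two]
  refine ⟨hunit, hcont, h0, fun t => vPath α t, hcont.continuousOn, h0, rfl,
    fun t _ => hunit t⟩
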